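/- Let Λ = ∑_{j=1}^k λ_j X_j where X_j are independent Bernoulli random variables with parameters π_j ∈ [0,1] and weights λ_j ∈ [0,1]. Then for any constant C ≥ 1/(e-1), E[min(Λ, C)] ≥ (1/168) · min(E[Λ], C). -/

import Mathlib

open MeasureTheory ProbabilityTheory Finset

lemma auxA {a : ℝ} (h0 : 0 ≤ a) (h1 : a ≤ 1) :
    Real.exp (-a) ≤ 1 - (1 - Real.exp (-1)) * a := by
  have h := convexOn_exp.2 (Set.mem_univ (0:ℝ)) (Set.mem_univ (-1:ℝ))
    (by linarith : (0:ℝ) ≤ 1 - a) h0 (by ring)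
  simp only [smul_eq_mul, mul_zero, mul_neg, mul_one, zero_add, Real.exp_zero] at h
  nlinarith [h]

set_option maxHeartbeats 1600000 in
theorem stmt_2 {Ω : Type*} [MeasureSpace Ω] [IsProbabilityMeasure (ℙ : Measure Ω)]
    {k : ℕ} (X : Fin k → Ω → ℝ) (π lam : Fin k → ℝ)
    (hπ : ∀ j, π j ∈ Set.Icc (0 : ℝ) 1)
    (hlam : ∀ j, lam j ∈ Set.Icc (0 : ℝ) 1)
    (hmeas : ∀ j, Measurable (X j))
    (hindep : iIndepFun X ℙ)
    (hber : ∀ j, ∀ᵐ ω ∂ℙ, X j ω = 0 ∨ X j ω = 1)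
    (hP : ∀ j, (ℙ {ω | X j ω = 1}).toReal = π j)
    (C : ℝ) (hC : 1 / (Real.exp 1 - 1) ≤ C) :
    (1 / 168 : ℝ) * min (∫ ω, ∑ j, lam j * X j ω) C ≤
      ∫ ω, min (∑ j, lam j * X j ω) C := by
  classical
  have he1 : (2.7182818283 : ℝ) < Real.exp 1 := Real.exp_one_gt_d9
  have he2 : Real.exp 1 < 2.7182818286 := Real.exp_one_lt_d9
  have hCpos : 0 < C := lt_of_lt_of_le (div_pos one_pos (by linarith)) hC
  set Λ : Ω → ℝ := fun ω => ∑ j, lam j * X j ω with hΛdef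
  have hΛmeas : Measurable Λ := Finset.measurable_sum _ fun j _ => (hmeas j).const_mul _
  have hXint : ∀ j, Integrable (X j) ℙ := fun j =>
    (integrable_const (1:ℝ)).mono' (hmeas j).aestronglyMeasurable
      ((hber j).mono fun ω h => by rcases h with h | h <;> simp [h])
  have hEX : ∀ j, ∫ ω, X j ω = π j := by
    intro j
    have hs : MeasurableSet {ω | X j ω = 1} := (hmeas j) (measurableSet_singleton 1)
    have h1 : ∫ ω, X j ω = ∫ ω, Set.indicator {ω | X j ω = 1} (fun _ => (1:ℝ)) ω := by
      apply integral_congr_ae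
      filter_upwards [hber j] with ω h
      rcases h with h | h <;> simp [Set.indicator_apply, Set.mem_setOf_eq, h]
    rw [h1, integral_indicator_const _ hs, measureReal_def, hP j]
    simp
  have hΛint : Integrable Λ ℙ :=
    integrable_finset_sum _ fun j _ => (hXint j).const_mul _
  have hmean : ∫ ω, Λ ω = ∑ j, lam j * π j := by
    rw [hΛdef, integral_finset_sum _ fun j _ => (hXint j).const_mul _]
    exact Finset.sum_congr rfl fun j _ => by rw [integral_const_mul, hEX j]
  set μE : ℝ := ∑ j, lam j * π j with hμEdef
  have hμE0 : 0 ≤ μE :=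
    Finset.sum_nonneg fun j _ => mul_nonneg (hlam j).1 (hπ j).1
  set m : ℝ := min μE C with hmdef
  have hm0 : 0 ≤ m := le_min hμE0 hCpos.le
  set t : ℝ := max 1 m with htdef
  have ht1 : (1:ℝ) ≤ t := le_max_left _ _
  have ht0 : (0:ℝ) < t := lt_of_lt_of_le one_pos ht1
  set u : ℝ := -(1/t) with hudef
  have hu0 : u ≤ 0 := by simp [hudef]; positivity
  set c : ℝ := 1 - Real.exp (-1) with hcdef
  have hexpinv : Real.exp (-1) = (Real.exp 1)⁻¹ := by
    rw [Real.exp_neg]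
  have hc1 : 0.63 ≤ c := by
    rw [hcdef, hexpinv]
    have : (Real.exp 1)⁻¹ ≤ (2.7182818283 : ℝ)⁻¹ := by
      apply inv_anti₀ (by norm_num) he1.le
    nlinarith
  have hc2 : c ≤ 1 := by
    rw [hcdef]
    have := Real.exp_pos (-1)
    linarith
  -- a.e. nonnegativity of Λ
  have hΛ0 : ∀ᵐ ω ∂ℙ, 0 ≤ Λ ω := by
    have hall : ∀ᵐ ω ∂ℙ, ∀ j, X j ω = 0 ∨ X j ω = 1 := (ae_all_iff).2 hber
    filter_upwards [hall] with ω h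
    apply Finset.sum_nonneg
    intro j _
    rcases h j with h' | h' <;> simp [h', (hlam j).1]
  -- integrability
  have hminint : Integrable (fun ω => min (Λ ω) C) ℙ := by
    refine (integrable_const C).mono' ((hΛmeas.min measurable_const).aestronglyMeasurable) ?_
    filter_upwards [hΛ0] with ω h
    rw [Real.norm_eq_abs, abs_le]
    constructor
    · have := le_min h hCpos.le
      linarith
    · exact min_le_right _ _
  have hexpmeas : Measurable (fun ω => Real.exp (u * Λ ω)) := (hΛmeas.const_mul u).exp
  have hexpint : Integrable (fun ω => Real.exp (u * Λ ω)) ℙ := by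
    refine (integrable_const (1:ℝ)).mono' hexpmeas.aestronglyMeasurable ?_
    filter_upwards [hΛ0] with ω h
    rw [Real.norm_eq_abs, abs_of_pos (Real.exp_pos _)]
    exact Real.exp_le_one_iff.2 (mul_nonpos_of_nonpos_of_nonneg hu0 h)
  -- product formula via mgf
  have hmgfj : ∀ j, mgf (fun ω => lam j * X j ω) ℙ u
      = 1 - π j * (1 - Real.exp (u * lam j)) := by
    intro j
    have hcongr : ∀ᵐ ω ∂ℙ,
        Real.exp (u * (lam j * X j ω)) = 1 - (1 - Real.exp (u * lam j)) * X j ω := by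
      filter_upwards [hber j] with ω h
      rcases h with h | h <;> simp [h, mul_one, mul_zero]
    have : mgf (fun ω => lam j * X j ω) ℙ u
        = ∫ ω, (1 - (1 - Real.exp (u * lam j)) * X j ω) ∂ℙ := by
      rw [mgf]
      exact integral_congr_ae hcongr
    rw [this, integral_sub (integrable_const 1) ((hXint j).const_mul _),
      integral_const_mul, hEX j, integral_const]
    simp [mul_comm]
  have hprod : ∫ ω, Real.exp (u * Λ ω)
      = ∏ j, (1 - π j * (1 - Real.exp (u * lam j))) := by
    have hind2 : iIndepFun (fun j (ω : Ω) => lam j * X j ω) ℙ :=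
      hindep.comp (fun j x => lam j * x) (fun j => measurable_const_mul _)
    have hsum := hind2.mgf_sum (fun j => (hmeas j).const_mul _) Finset.univ (t := u)
    have hfun : (∑ j : Fin k, fun ω => lam j * X j ω) = Λ := by
      funext ω; simp [hΛdef]
    rw [hfun] at hsum
    have : ∫ ω, Real.exp (u * Λ ω) = mgf Λ ℙ u := rfl
    rw [this, hsum]
    exact Finset.prod_congr rfl fun j _ => hmgfj j
  -- bound the product
  have hprodle : ∏ j, (1 - π j * (1 - Real.exp (u * lam j)))
      ≤ Real.exp (-(c * μE / t)) := by
    calc ∏ j, (1 - π j * (1 - Real.exp (u * lam j)))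
        ≤ ∏ j, Real.exp (-(c * (lam j * π j) / t)) := by
          apply Finset.prod_le_prod
          · intro j _
            have h1 : Real.exp (u * lam j) ≤ 1 :=
              Real.exp_le_one_iff.2 (mul_nonpos_of_nonpos_of_nonneg hu0 (hlam j).1)
            have h2 := Real.exp_pos (u * lam j)
            nlinarith [(hπ j).1, (hπ j).2]
          · intro j _
            have harg : u * lam j = -(lam j / t) := by rw [hudef]; ring
            have ha0 : 0 ≤ lam j / t := div_nonneg (hlam j).1 ht0.le
            have ha1 : lam j / t ≤ 1 := by
              rw [div_le_one ht0]; linarith [(hlam j).2]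
            have hA := auxA ha0 ha1
            rw [← harg] at hA
            have hstep : -(π j * (1 - Real.exp (u * lam j))) ≤ -(c * (lam j * π j) / t) := by
              have : c * (lam j / t) ≤ 1 - Real.exp (u * lam j) := by
                rw [hcdef]; linarith
              have h' := mul_le_mul_of_nonneg_left this (hπ j).1
              have heq : c * (lam j * π j) / t = π j * (c * (lam j / t)) := by
                field_simp
              rw [heq]
              linarith
            calc 1 - π j * (1 - Real.exp (u * lam j))
                ≤ Real.exp (-(π j * (1 - Real.exp (u * lam j)))) := by
                  linarith [Real.add_one_le_exp (-(π j * (1 - Real.exp (u * lam j))))]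
              _ ≤ _ := Real.exp_le_exp.2 hstep
      _ = Real.exp (∑ j, -(c * (lam j * π j) / t)) := (Real.exp_sum _ _).symm
      _ = Real.exp (-(c * μE / t)) := by
          congr 1
          rw [hμEdef, Finset.mul_sum, Finset.sum_div, ← Finset.sum_neg_distrib]
  -- pointwise bound and integration
  have hpoint : ∀ᵐ ω ∂ℙ,
      min t C * (1 - Real.exp (u * Λ ω)) ≤ min (Λ ω) C := by
    filter_upwards [hΛ0] with ω h
    have harg : u * Λ ω = -(Λ ω / t) := by rw [hudef]; ring
    have hE1 : Real.exp (u * Λ ω) ≤ 1 :=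
      Real.exp_le_one_iff.2 (mul_nonpos_of_nonpos_of_nonneg hu0 h)
    have hE2 : 1 - Λ ω / t ≤ Real.exp (u * Λ ω) := by
      rw [harg]
      linarith [Real.add_one_le_exp (-(Λ ω / t))]
    apply le_min
    · calc min t C * (1 - Real.exp (u * Λ ω)) ≤ t * (Λ ω / t) := by
            apply mul_le_mul (min_le_left _ _) (by linarith)
              (by linarith) ht0.le
        _ = Λ ω := by field_simp
    · calc min t C * (1 - Real.exp (u * Λ ω)) ≤ C * 1 := by
            apply mul_le_mul (min_le_right _ _) (by linarith [Real.exp_pos (u * Λ ω)]) (by linarith) hCpos.le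
        _ = C := mul_one C
  have step1 : min t C * (1 - ∫ ω, Real.exp (u * Λ ω)) ≤ ∫ ω, min (Λ ω) C := by
    have : ∫ ω, min t C * (1 - Real.exp (u * Λ ω)) ∂ℙ
        = min t C * (1 - ∫ ω, Real.exp (u * Λ ω)) := by
      rw [integral_const_mul, integral_sub (integrable_const 1) hexpint]
      simp
    rw [← this]
    exact integral_mono_ae (((integrable_const 1).sub hexpint).const_mul _) hminint hpoint
  have hmintC0 : 0 ≤ min t C := le_min ht0.le hCpos.le
  have step2 : min t C * (1 - Real.exp (-(c * μE / t)))
      ≤ min t C * (1 - ∫ ω, Real.exp (u * Λ ω)) := by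
    apply mul_le_mul_of_nonneg_left _ hmintC0
    rw [hprod]
    linarith [hprodle]
  rw [show integral ℙ Λ = μE from hmean, ← hmdef,
    show (∫ ω, min (∑ j, lam j * X j ω) C) = ∫ ω, min (Λ ω) C from rfl]
  clear_value Λ μE m t u c
  -- numeric step
  have step3 : (1/168 : ℝ) * m ≤ min t C * (1 - Real.exp (-(c * μE / t))) := by
    have hmμ : m ≤ μE := by rw [hmdef]; exact min_le_left _ _
    have hmC : m ≤ C := by rw [hmdef]; exact min_le_right _ _
    rcases le_or_gt 1 m with hm1 | hm1
    · -- t = m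
      have htm : t = m := by rw [htdef]; exact max_eq_right hm1
      have hmin : min t C = m := by rw [htm]; exact min_eq_left hmC
      have h1 : c ≤ c * μE / t := by
        rw [le_div_iff₀ ht0, htm]
        nlinarith [hmμ, hc1, hm1]
      have h2 : Real.exp (-(c * μE / t)) ≤ Real.exp (-c) := by
        apply Real.exp_le_exp.2; linarith
      have h3 : Real.exp (-c) ≤ 1 - c * c := by
        have := auxA (by linarith : (0:ℝ) ≤ c) hc2
        rw [← hcdef] at this
        linarith
      rw [hmin]
      have hx : c * c ≤ 1 - Real.exp (-(c * μE / t)) := by linarith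
      have hm0' : (0:ℝ) ≤ m := by linarith
      have hcc : (1/168 : ℝ) ≤ c * c := by nlinarith [hc1, sq_nonneg (c - 0.63)]
      calc (1/168 : ℝ) * m = m * (1/168) := by ring
        _ ≤ m * (c * c) := mul_le_mul_of_nonneg_left hcc hm0'
        _ ≤ m * (1 - Real.exp (-(c * μE / t))) := mul_le_mul_of_nonneg_left hx hm0'
    · -- t = 1
      have htm : t = 1 := by rw [htdef]; exact max_eq_left hm1.le
      have hd : 1 / (Real.exp 1 - 1) ≤ min t C := by
        apply le_min
        · rw [htm]
          rw [div_le_one (by linarith)]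
          linarith
        · exact hC
      have hdpos : (0:ℝ) < 1 / (Real.exp 1 - 1) := div_pos one_pos (by linarith)
      have h1 : c * m ≤ c * μE / t := by
        rw [htm]
        simp only [div_one]
        nlinarith [hmμ, hc1]
      have h2 : Real.exp (-(c * μE / t)) ≤ Real.exp (-(c * m)) := by
        apply Real.exp_le_exp.2; linarith
      have h3 : Real.exp (-(c * m)) ≤ 1 - c * (c * m) := by
        have := auxA (mul_nonneg (by linarith) hm0) (by nlinarith [hc2, hm0, hm1] : c * m ≤ 1)
        rw [← hcdef] at this
        nlinarith
      have h4 : 1 - Real.exp (-(c * μE / t)) ≥ c * (c * m) := by linarith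
      have hccm0 : (0:ℝ) ≤ c * (c * m) :=
        mul_nonneg (by linarith) (mul_nonneg (by linarith) hm0)
      have h5 : (1 / (Real.exp 1 - 1)) * (c * (c * m)) ≤ min t C * (1 - Real.exp (-(c * μE / t))) :=
        mul_le_mul hd h4 hccm0 hmintC0
      have hd2 : (0.58 : ℝ) ≤ 1 / (Real.exp 1 - 1) := by
        rw [le_div_iff₀ (by linarith)]
        nlinarith
      have hcc : (1/168 : ℝ) ≤ 0.58 * (c * c) := by nlinarith [hc1, sq_nonneg (c - 0.63)]
      have h6 : (1/168 : ℝ) * m ≤ (1 / (Real.exp 1 - 1)) * (c * (c * m)) := by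
        calc (1/168 : ℝ) * m = m * (1/168) := by ring
          _ ≤ m * (0.58 * (c * c)) := mul_le_mul_of_nonneg_left hcc hm0
          _ = (c * (c * m)) * 0.58 := by ring
          _ ≤ (c * (c * m)) * (1 / (Real.exp 1 - 1)) :=
              mul_le_mul_of_nonneg_left hd2 hccm0
          _ = (1 / (Real.exp 1 - 1)) * (c * (c * m)) := by ring
      linarith
  -- conclude
  exact le_trans (le_trans step3 step2) step1
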